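/- Lemma 3.2(g), general mesh: for every α ∈ (0,1), every partition 0 = t_0 < ⋯ < t_N = T, and every 2 ≤ n ≤ N, one has α · P^{n,n}_α ≤ μ_n^α · P^{n,n−1}_α, where μ_n = Δt_n/Δt_{n−1} (equivalently P^{n,n}_α / P^{n,n−1}_α ≤ μ_n^α/α, the denominator being positive). -/

import Mathlib

open Finset

/-- The kernel `k_β(s) = s^(β-1)/Γ(β)`. -/
noncomputable def kker (β s : ℝ) : ℝ := s ^ (β - 1) / Real.Gamma β

/-- The discrete L1 kernels `K^{n,j}_{1-α}`. -/
noncomputable def Kd (α : ℝ) (t : ℕ → ℝ) (n j : ℕ) : ℝ :=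
  (kker (2 - α) (t n - t (j - 1)) - kker (2 - α) (t n - t j)) / (t j - t (j - 1))

/-- The complementary discrete kernels `P^{n,i}_α`, defined by downward recursion. -/
noncomputable def Pd (α : ℝ) (t : ℕ → ℝ) (n i : ℕ) : ℝ :=
  if i = n then 1 / Kd α t n n
  else (1 / Kd α t i i) *
    ∑ j ∈ (Finset.Ioc i n).attach,
      Pd α t n j.1 * (Kd α t j.1 (i + 1) - Kd α t j.1 i)
termination_by n - i
decreasing_by
  have h := Finset.mem_Ioc.mp j.2
  omega

/-! With `a = Δt_{n-1}` and `b = Δt_n`, the recursion gives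
`P^{n,n-1} = P^{n,n} (K^{n,n} - K^{n,n-1}) / K^{n-1,n-1}`, and the three kernels are explicit:
`Γ(2-α) K^{n,n} = b^{-α}`, `Γ(2-α) K^{n-1,n-1} = a^{-α}`,
`Γ(2-α) K^{n,n-1} = ((a+b)^{1-α} - b^{1-α}) / a`. Clearing denominators, the bound becomes the
weighted AM–GM inequality `b^α (a+b)^{1-α} ≤ α b + (1-α)(a+b)`, which also makes
`K^{n,n} - K^{n,n-1}`, hence `P^{n,n-1}`, positive. -/

open Real

lemma rpow_mul_add_rpow_one_sub_le {a b α : ℝ} (ha : 0 ≤ a) (hb : 0 ≤ b) (hα0 : 0 ≤ α)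
    (hα1 : α ≤ 1) : b ^ α * (a + b) ^ (1 - α) ≤ a + b - α * a := by
  have := geom_mean_le_arith_mean2_weighted hα0 (sub_nonneg.2 hα1) hb (add_nonneg ha hb)
    (add_sub_cancel α 1)
  linarith

lemma mul_rpow_neg_le_div_rpow_mul {a b α : ℝ} (ha : 0 < a) (hb : 0 < b) (hα0 : 0 ≤ α)
    (hα1 : α ≤ 1) :
    α * a ^ (-α) ≤ (b / a) ^ α * (b ^ (-α) - ((a + b) ^ (1 - α) - b ^ (1 - α)) / a) := by
  have hB : 0 < b ^ α := rpow_pos_of_pos hb α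
  rw [div_rpow hb.le ha.le, rpow_neg hb.le, rpow_neg ha.le, rpow_sub hb, rpow_one]
  have hRHS : b ^ α / a ^ α * ((b ^ α)⁻¹ - ((a + b) ^ (1 - α) - b / b ^ α) / a)
      = (a ^ α)⁻¹ * ((a + b - b ^ α * (a + b) ^ (1 - α)) / a) := by
    field_simp
    ring
  rw [hRHS, mul_comm]
  gcongr
  rw [le_div_iff₀ ha]
  linarith [rpow_mul_add_rpow_one_sub_le ha.le hb.le hα0 hα1]

lemma kker_two_sub (α s : ℝ) : kker (2 - α) s = s ^ (1 - α) / Gamma (2 - α) := by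
  rw [kker]
  ring_nf

lemma Kd_succ (α : ℝ) (t : ℕ → ℝ) (n j : ℕ) :
    Kd α t n (j + 1) = ((t n - t j) ^ (1 - α) - (t n - t (j + 1)) ^ (1 - α))
      / (t (j + 1) - t j) / Gamma (2 - α) := by
  rw [Kd, kker_two_sub, kker_two_sub, Nat.add_sub_cancel]
  ring

lemma Kd_succ_self {α : ℝ} {t : ℕ → ℝ} {j : ℕ} (hα : α ≠ 1) (ht : t j < t (j + 1)) :
    Kd α t (j + 1) (j + 1) = (t (j + 1) - t j) ^ (-α) / Gamma (2 - α) := by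
  rw [Kd_succ, sub_self, zero_rpow (sub_ne_zero.2 hα.symm), sub_zero,
    ← rpow_sub_one (sub_pos.2 ht).ne', sub_sub_cancel_left]

lemma Kd_succ_self_pos {α : ℝ} {t : ℕ → ℝ} {j : ℕ} (hα1 : α ≠ 1) (hα2 : α < 2)
    (ht : t j < t (j + 1)) : 0 < Kd α t (j + 1) (j + 1) := by
  rw [Kd_succ_self hα1 ht]
  have := Gamma_pos_of_pos (sub_pos.2 hα2)
  have := sub_pos.2 ht
  positivity

lemma mul_Kd_succ_self_le {α : ℝ} {t : ℕ → ℝ} {m : ℕ} (hα0 : 0 ≤ α) (hα1 : α < 1)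
    (h0 : t m < t (m + 1)) (h1 : t (m + 1) < t (m + 2)) :
    α * Kd α t (m + 1) (m + 1) ≤ ((t (m + 2) - t (m + 1)) / (t (m + 1) - t m)) ^ α *
      (Kd α t (m + 2) (m + 2) - Kd α t (m + 2) (m + 1)) := by
  have key := mul_rpow_neg_le_div_rpow_mul (sub_pos.2 h0) (sub_pos.2 h1) hα0 hα1.le
  rw [sub_add_sub_cancel'] at key
  have hγ := Gamma_pos_of_pos (by linarith : (0 : ℝ) < 2 - α)
  rw [Kd_succ_self hα1.ne h0, Kd_succ_self hα1.ne h1, Kd_succ, ← sub_div, mul_div_assoc',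
    mul_div_assoc']
  gcongr

lemma Pd_self (α : ℝ) (t : ℕ → ℝ) (n : ℕ) : Pd α t n n = (Kd α t n n)⁻¹ := by
  rw [Pd, if_pos rfl, one_div]

lemma Pd_succ_self (α : ℝ) (t : ℕ → ℝ) (n : ℕ) :
    Pd α t (n + 1) n = (Kd α t n n)⁻¹ *
      (Pd α t (n + 1) (n + 1) * (Kd α t (n + 1) (n + 1) - Kd α t (n + 1) n)) := by
  have hIoc : Ioc n (n + 1) = {n + 1} := by
    ext x
    simp only [mem_Ioc, mem_singleton]
    omega
  rw [Pd, if_neg (Nat.succ_ne_self n).symm, one_div,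
    sum_attach (Ioc n (n + 1)) (fun j => Pd α t (n + 1) j * (Kd α t j (n + 1) - Kd α t j n)),
    hIoc, sum_singleton]

lemma Pd_succ_self_pos_and_le {α c : ℝ} {t : ℕ → ℝ} {n : ℕ} (hα : 0 < α) (hc : 0 < c)
    (hK : 0 < Kd α t n n) (hK' : 0 < Kd α t (n + 1) (n + 1))
    (h : α * Kd α t n n ≤ c * (Kd α t (n + 1) (n + 1) - Kd α t (n + 1) n)) :
    0 < Pd α t (n + 1) n ∧ α * Pd α t (n + 1) (n + 1) ≤ c * Pd α t (n + 1) n := by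
  have hd : 0 < Kd α t (n + 1) (n + 1) - Kd α t (n + 1) n :=
    pos_of_mul_pos_right ((mul_pos hα hK).trans_le h) hc.le
  rw [Pd_succ_self, Pd_self]
  refine ⟨by positivity, ?_⟩
  calc α * (Kd α t (n + 1) (n + 1))⁻¹
      ≤ c * (Kd α t (n + 1) (n + 1) - Kd α t (n + 1) n) / Kd α t n n
        * (Kd α t (n + 1) (n + 1))⁻¹ := by
        gcongr
        exact (le_div_iff₀ hK).2 h
    _ = _ := by ring

theorem complementary_kernel_ratio_bound_general
    (α : ℝ) (N : ℕ) (t : ℕ → ℝ)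
    (hα0 : 0 < α) (hα1 : α < 1)
    (hmono : ∀ j, j < N → t j < t (j + 1)) :
    ∀ n, 2 ≤ n → n ≤ N →
      0 < Pd α t n (n - 1) ∧
      α * Pd α t n n ≤
        ((t n - t (n - 1)) / (t (n - 1) - t (n - 2))) ^ α * Pd α t n (n - 1) := by
  intro n hn hnN
  obtain ⟨m, rfl⟩ : ∃ m, n = m + 2 := ⟨n - 2, by omega⟩
  have h0 := hmono m (by omega)
  have h1 := hmono (m + 1) (by omega)
  have hμ : 0 < (t (m + 2) - t (m + 1)) / (t (m + 1) - t m) :=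
    div_pos (sub_pos.2 h1) (sub_pos.2 h0)
  exact Pd_succ_self_pos_and_le hα0 (rpow_pos_of_pos hμ α)
    (Kd_succ_self_pos hα1.ne (by linarith) h0) (Kd_succ_self_pos hα1.ne (by linarith) h1)
    (mul_Kd_succ_self_le hα0.le hα1 h0 h1)

/-- Lemma 3.2(g), general mesh: for `2 ≤ n ≤ N`,
`α · P^{n,n}_α ≤ μ_n^α · P^{n,n-1}_α` where `μ_n = Δt_n/Δt_{n-1}`
(and the "denominator" `P^{n,n-1}_α` is positive). -/
theorem complementary_kernel_ratio_bound
    (α T : ℝ) (N : ℕ) (t : ℕ → ℝ)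
    (hα0 : 0 < α) (hα1 : α < 1) (hT : 0 < T)
    (ht0 : t 0 = 0) (htN : t N = T)
    (hmono : ∀ j, j < N → t j < t (j + 1)) :
    ∀ n, 2 ≤ n → n ≤ N →
      0 < Pd α t n (n - 1) ∧
      α * Pd α t n n ≤
        ((t n - t (n - 1)) / (t (n - 1) - t (n - 2))) ^ α * Pd α t n (n - 1) :=
  complementary_kernel_ratio_bound_general α N t hα0 hα1 hmono
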